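/- Let γ : [0,1] → ℂ be a continuously differentiable path (the contour C) with endpoints A = γ(0), B = γ(1). Let f : ℂ → ℂ be holomorphic and for u ∈ ℝ define f_u(α) := f(α + iu), so that ∂f_u/∂u = i·f_u'. Let R : ℂ × ℂ → ℂ be continuous, and let D₋, D₊ : ℂ → ℂ be differentiable along C with ∂D₋/∂α(α) = R(α,A)·D₋(A) − R(α,B)·D₋(B) and ∂D₊/∂α(α) = −R(α,B)·(1 + D₊(B)) − R(α,A)·(1 − D₊(A)) for all α. Define G_H(u) := −2i·∫_C f_u'(α)·D₋(α) dα, G_q(u) := (1/2)·(f_u(B) + f_u(A)) + (1/2)·∫_C f_u'(α)·D₊(α) dα, ξ(u) := 2πi·( f_u'(B) + ∫_C f_u'(α)·R(α,B) dα ), and ξ̃(u) := 2πi·( f_u'(A) + ∫_C f_u'(α)·R(α,A) dα ). Then: G_H'(u) = −(i/π)·( D₋(B)·ξ(u) − D₋(A)·ξ̃(u) ) and G_q'(u) = (1/(4π))·( (1 + D₊(B))·ξ(u) + (1 − D₊(A))·ξ̃(u) ). -/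

import Mathlib

/-
Differentiating under the integral sign turns `∂_u f_u'` into `i f_u''`. Integrating by
parts along `C` moves that derivative onto `D`, giving boundary terms at `B` and `A` minus
`∫_C f_u' ∂_α D`; the formulas for `∂_α D±` express the latter through `∫_C f_u' R(·, A)`
and `∫_C f_u' R(·, B)`, which combine with the boundary terms into `ξ̃` and `ξ`.
-/

/-- Contour integral of `f` along the path `γ : [0,1] → ℂ`:
`∫_C f(β) dβ := ∫₀¹ f(γ(t)) γ'(t) dt`. -/
noncomputable def cInt (γ : ℝ → ℂ) (f : ℂ → ℂ) : ℂ :=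
  ∫ t in (0:ℝ)..1, f (γ t) * deriv γ t

open Complex Set MeasureTheory intervalIntegral
open scoped Pointwise

theorem HasDerivAt.comp_I_mul_ofReal {F : ℂ → ℂ} {F' : ℂ} {u : ℝ}
    (hF : HasDerivAt F F' (I * u)) :
    HasDerivAt (fun v : ℝ => F (I * v)) (I * F') u := by
  have := hF.comp (u : ℂ) ((hasDerivAt_id (u : ℂ)).const_mul I)
  simpa [mul_comm] using this.comp_ofReal

theorem intervalIntegral.hasDerivAt_integral_comp_add_mul {g : ℂ → ℂ}
    (hg : Differentiable ℂ g) {z k : ℝ → ℂ} (hz : Continuous z) (hk : Continuous k)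
    (a b : ℝ) (w₀ : ℂ) :
    HasDerivAt (fun w => ∫ t in a..b, g (z t + w) * k t)
      (∫ t in a..b, deriv g (z t + w₀) * k t) w₀ := by
  have hK : IsCompact (z '' uIcc a b + Metric.closedBall w₀ 1) :=
    (isCompact_uIcc.image hz).add (isCompact_closedBall w₀ 1)
  obtain ⟨C, hC⟩ := hK.exists_bound_of_continuousOn hg.deriv.continuous.continuousOn
  have h_bound : ∀ t ∈ uIoc a b, ∀ w ∈ Metric.ball w₀ 1,
      ‖deriv g (z t + w) * k t‖ ≤ C * ‖k t‖ := fun t ht w hw => by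
    rw [norm_mul]
    gcongr
    exact hC _ (add_mem_add (mem_image_of_mem z (uIoc_subset_uIcc ht))
      (Metric.ball_subset_closedBall hw))
  have hcont : ∀ (G : ℂ → ℂ), Continuous G → ∀ w, Continuous fun t => G (z t + w) * k t :=
    fun G hG w => (hG.comp (hz.add continuous_const)).mul hk
  exact (hasDerivAt_integral_of_dominated_loc_of_deriv_le (Metric.ball_mem_nhds w₀ one_pos)
    (Filter.Eventually.of_forall fun w => (hcont g hg.continuous w).aestronglyMeasurable)
    ((hcont g hg.continuous w₀).intervalIntegrable a b)
    (hcont _ hg.deriv.continuous w₀).aestronglyMeasurable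
    (Filter.Eventually.of_forall h_bound)
    ((continuous_const.mul hk.norm).intervalIntegrable a b)
    (Filter.Eventually.of_forall fun t _ w _ =>
      ((hg _).hasDerivAt.comp_const_add (z t) w).mul_const (k t))).2

section Contour

variable {γ : ℝ → ℂ}

theorem ContDiff.intervalIntegrable_comp_mul_deriv (hγ : ContDiff ℝ 1 γ) {φ : ℂ → ℂ}
    (hφ : Continuous φ) (a b : ℝ) :
    IntervalIntegrable (fun t => φ (γ t) * deriv γ t) volume a b :=
  ((hφ.comp hγ.continuous).mul (hγ.continuous_deriv le_rfl)).intervalIntegrable a b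

theorem cInt_add (hγ : ContDiff ℝ 1 γ) {φ ψ : ℂ → ℂ} (hφ : Continuous φ) (hψ : Continuous ψ) :
    cInt γ (fun α => φ α + ψ α) = cInt γ φ + cInt γ ψ := by
  simp only [cInt, add_mul]
  exact integral_add (hγ.intervalIntegrable_comp_mul_deriv hφ 0 1)
    (hγ.intervalIntegrable_comp_mul_deriv hψ 0 1)

theorem cInt_const_mul (c : ℂ) (φ : ℂ → ℂ) : cInt γ (fun α => c * φ α) = c * cInt γ φ := by
  simp only [cInt, mul_assoc, intervalIntegral.integral_const_mul]

theorem hasDerivAt_cInt_comp_add_mul (hγ : ContDiff ℝ 1 γ) {g h : ℂ → ℂ}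
    (hg : Differentiable ℂ g) (hh : Continuous h) (w : ℂ) :
    HasDerivAt (fun w => cInt γ (fun α => g (α + w) * h α))
      (cInt γ (fun α => deriv g (α + w) * h α)) w := by
  simp only [cInt, mul_assoc]
  exact hasDerivAt_integral_comp_add_mul hg hγ.continuous
    ((hh.comp hγ.continuous).mul (hγ.continuous_deriv le_rfl)) 0 1 w

theorem cInt_deriv_mul_eq_sub (hγ : ContDiff ℝ 1 γ) {F h : ℂ → ℂ} (hF : Differentiable ℂ F)
    (hh : Differentiable ℂ h) :
    cInt γ (fun α => deriv F α * h α)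
      = F (γ 1) * h (γ 1) - F (γ 0) * h (γ 0) - cInt γ (fun α => F α * deriv h α) := by
  have hγd : Differentiable ℝ γ := hγ.differentiable one_ne_zero
  have parts := integral_mul_deriv_eq_deriv_mul
    (fun t _ => (hh (γ t)).hasDerivAt.comp t (hγd t).hasDerivAt)
    (fun t _ => (hF (γ t)).hasDerivAt.comp t (hγd t).hasDerivAt)
    (hγ.intervalIntegrable_comp_mul_deriv hh.deriv.continuous 0 1)
    (hγ.intervalIntegrable_comp_mul_deriv hF.deriv.continuous 0 1)
  simp only [cInt, Function.comp_apply] at parts ⊢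
  convert parts using 1
  · exact integral_congr fun t _ => by ring
  · rw [mul_comm (F _), mul_comm (F _)]
    congr 1
    exact integral_congr fun t _ => by ring

theorem cInt_mul_add_mul (hγ : ContDiff ℝ 1 γ) {φ ρ σ : ℂ → ℂ} (hφ : Continuous φ)
    (hρ : Continuous ρ) (hσ : Continuous σ) (a b : ℂ) :
    cInt γ (fun α => φ α * (a * ρ α + b * σ α))
      = a * cInt γ (fun α => φ α * ρ α) + b * cInt γ (fun α => φ α * σ α) := by
  rw [← cInt_const_mul, ← cInt_const_mul, ← cInt_add hγ (by fun_prop) (by fun_prop)]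
  congr 1
  funext α
  ring

theorem hasDerivAt_cInt_deriv_comp_add_I_mul (hγ : ContDiff ℝ 1 γ) {f D : ℂ → ℂ}
    (hf : Differentiable ℂ f) (hD : Differentiable ℂ D) (u : ℝ) :
    HasDerivAt (fun v : ℝ => cInt γ (fun α => deriv f (α + I * v) * D α))
      (I * (deriv f (γ 1 + I * u) * D (γ 1) - deriv f (γ 0 + I * u) * D (γ 0)
        - cInt γ (fun α => deriv f (α + I * u) * deriv D α))) u := by
  have hshift : Differentiable ℂ fun α => deriv f (α + I * u) :=
    hf.deriv.comp (differentiable_id.add_const _)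
  rw [← cInt_deriv_mul_eq_sub hγ hshift hD]
  simp only [deriv_comp_add_const]
  exact (hasDerivAt_cInt_comp_add_mul hγ hf.deriv hD.continuous (I * u)).comp_I_mul_ofReal

end Contour

/-- derivatives in the spectral parameter `u` of
`G_H(u) = −2i∫_C f_u'·D₋ dα` and `G_q(u) = (1/2)(f_u(B)+f_u(A)) + (1/2)∫_C f_u'·D₊ dα`,
where `f_u(α) = f(α + iu)`, given the formulas for `∂D₋/∂α` and `∂D₊/∂α`:
`G_H'(u) = −(i/π)(D₋(B)ξ(u) − D₋(A)ξ̃(u))` and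
`G_q'(u) = (1/4π)((1+D₊(B))ξ(u) + (1−D₊(A))ξ̃(u))`. -/
theorem stmt_17 (γ : ℝ → ℂ) (hγ : ContDiff ℝ 1 γ)
    (A B : ℂ) (hA : A = γ 0) (hB : B = γ 1)
    (f : ℂ → ℂ) (hf : Differentiable ℂ f)
    (R : ℂ → ℂ → ℂ) (hRc : Continuous fun p : ℂ × ℂ => R p.1 p.2)
    (Dm Dp : ℂ → ℂ)
    (hDmd : Differentiable ℂ Dm) (hDpd : Differentiable ℂ Dp)
    (hDm' : ∀ α : ℂ, deriv Dm α = R α A * Dm A - R α B * Dm B)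
    (hDp' : ∀ α : ℂ, deriv Dp α = -R α B * (1 + Dp B) - R α A * (1 - Dp A))
    (GH Gq ξ ξt : ℝ → ℂ)
    (hGH : ∀ u : ℝ, GH u
      = -2 * Complex.I * cInt γ (fun α => deriv f (α + Complex.I * (u : ℂ)) * Dm α))
    (hGq : ∀ u : ℝ, Gq u
      = (1 / 2) * (f (B + Complex.I * (u : ℂ)) + f (A + Complex.I * (u : ℂ)))
        + (1 / 2) * cInt γ (fun α => deriv f (α + Complex.I * (u : ℂ)) * Dp α))
    (hξ : ∀ u : ℝ, ξ u = 2 * (Real.pi : ℂ) * Complex.I *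
      (deriv f (B + Complex.I * (u : ℂ))
        + cInt γ (fun α => deriv f (α + Complex.I * (u : ℂ)) * R α B)))
    (hξt : ∀ u : ℝ, ξt u = 2 * (Real.pi : ℂ) * Complex.I *
      (deriv f (A + Complex.I * (u : ℂ))
        + cInt γ (fun α => deriv f (α + Complex.I * (u : ℂ)) * R α A))) :
    (∀ u : ℝ, deriv GH u
        = -(Complex.I / (Real.pi : ℂ)) * (Dm B * ξ u - Dm A * ξt u)) ∧
    (∀ u : ℝ, deriv Gq u
        = (1 / (4 * (Real.pi : ℂ))) * ((1 + Dp B) * ξ u + (1 - Dp A) * ξt u)) := by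
  have hπ : (Real.pi : ℂ) ≠ 0 := ofReal_ne_zero.mpr Real.pi_ne_zero
  have hR : ∀ β, Continuous fun α => R α β :=
    fun β => hRc.comp (continuous_id.prodMk continuous_const)
  have hφ : ∀ u : ℝ, Continuous fun α => deriv f (α + I * u) :=
    fun u => hf.deriv.continuous.comp (continuous_add_const _)
  have hsplit := fun u => cInt_mul_add_mul hγ (hφ u) (hR A) (hR B)
  have hDm : ∀ α, deriv Dm α = Dm A * R α A + -Dm B * R α B := fun α => by rw [hDm']; ring
  have hDp : ∀ α, deriv Dp α = -(1 - Dp A) * R α A + -(1 + Dp B) * R α B :=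
    fun α => by rw [hDp']; ring
  have hf_line : ∀ (c : ℂ) (u : ℝ),
      HasDerivAt (fun v : ℝ => f (c + I * v)) (I * deriv f (c + I * u)) u :=
    fun c u => ((hf _).hasDerivAt.comp_const_add c (I * u)).comp_I_mul_ofReal
  subst hA hB
  refine ⟨fun u => ?_, fun u => ?_⟩
  · rw [funext hGH, ((hasDerivAt_cInt_deriv_comp_add_I_mul hγ hf hDmd u).const_mul _).deriv]
    simp only [hDm, hsplit, hξ, hξt]
    field_simp
    ring
  · rw [funext hGq, ((((hf_line _ u).fun_add (hf_line _ u)).const_mul _).fun_add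
      ((hasDerivAt_cInt_deriv_comp_add_I_mul hγ hf hDpd u).const_mul _)).deriv]
    simp only [hDp, hsplit, hξ, hξt]
    field_simp
    ring
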